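/- arXiv:1103.3657 — 12 statements merged into one kernel-verified Lean document; each statement's English description precedes it below -/
import Mathlib

section
/- There exists a unique formal power series q in ℚ⟦X⟧ with zero constant coefficient satisfying the equation X·(2·(q')² + 3·q' + 2) = q'·(1 + q), where q' denotes the formal derivative of q. -/
/-!
Writing `d = q'`, the normalisation `q(0) = 0` makes `q = ∫ d` the antiderivative of `d`, and the
equation becomes the fixed-point equation `d = X·(2d² + 3d + 2) - d·∫d`. Since `∫` raises the
`X`-adic order by one, the right-hand side is determined up to degree `n` by `d` up to degree
`n - 1`: it is a contraction for the `X`-adic distance, so Picard iteration converges to its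
unique fixed point.
-/

open PowerSeries Function

namespace PowerSeries

section FixedPoint

variable {R : Type*} [Ring R]

theorem coeff_eq_of_X_pow_succ_dvd_sub {n : ℕ} {φ ψ : R⟦X⟧} (h : X ^ (n + 1) ∣ φ - ψ) :
    coeff n φ = coeff n ψ := by
  rw [← sub_eq_zero, ← map_sub]
  exact X_pow_dvd_iff.mp h n n.lt_succ_self

theorem X_pow_dvd_iterate_sub {Φ : R⟦X⟧ → R⟦X⟧}
    (hΦ : ∀ n φ ψ, X ^ n ∣ φ - ψ → X ^ (n + 1) ∣ Φ φ - Φ ψ) (m : ℕ) (φ ψ : R⟦X⟧) :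
    X ^ m ∣ Φ^[m] φ - Φ^[m] ψ := by
  induction m with
  | zero => simp
  | succ m ih =>
    rw [iterate_succ_apply', iterate_succ_apply']
    exact hΦ m _ _ ih

theorem existsUnique_isFixedPt_of_contracting {Φ : R⟦X⟧ → R⟦X⟧}
    (hΦ : ∀ n φ ψ, X ^ n ∣ φ - ψ → X ^ (n + 1) ∣ Φ φ - Φ ψ) :
    ∃! φ, IsFixedPt Φ φ := by
  set φ : R⟦X⟧ := mk fun n => coeff n (Φ^[n + 1] 0)
  have hφ : ∀ m, X ^ m ∣ φ - Φ^[m] 0 := by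
    refine fun m => X_pow_dvd_iff.mpr fun n hn => ?_
    obtain ⟨k, rfl⟩ := Nat.exists_eq_add_of_lt hn
    rw [map_sub, coeff_mk, sub_eq_zero, add_right_comm, iterate_add_apply Φ (n + 1) k]
    exact coeff_eq_of_X_pow_succ_dvd_sub (X_pow_dvd_iterate_sub hΦ (n + 1) 0 _)
  have hfix : IsFixedPt Φ φ := by
    ext m
    rw [coeff_eq_of_X_pow_succ_dvd_sub (hΦ m _ _ (hφ m)), ← iterate_succ_apply' Φ, coeff_mk]
  refine ⟨φ, hfix, fun ψ hψ => ?_⟩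
  have hψφ : ∀ n, X ^ n ∣ ψ - φ := by
    intro n
    induction n with
    | zero => simp
    | succ n ih => rw [← hψ.eq, ← hfix.eq]; exact hΦ n _ _ ih
  ext n
  exact coeff_eq_of_X_pow_succ_dvd_sub (hψφ (n + 1))

end FixedPoint

section Integral

variable {K : Type*} [Field K]

noncomputable def integral (d : K⟦X⟧) : K⟦X⟧ :=
  X * mk fun n => coeff n d / (n + 1)

theorem constantCoeff_integral (d : K⟦X⟧) : constantCoeff (integral d) = 0 := by
  simp [integral]

theorem derivative_integral [CharZero K] (d : K⟦X⟧) : d⁄dX K (integral d) = d := by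
  ext n
  rw [coeff_derivative, integral, coeff_succ_X_mul, coeff_mk]
  field_simp

theorem integral_derivative [CharZero K] {q : K⟦X⟧} (hq : constantCoeff q = 0) :
    integral (d⁄dX K q) = q :=
  derivative.ext (derivative_integral _) (by rw [constantCoeff_integral, hq])

theorem integral_sub (d₁ d₂ : K⟦X⟧) : integral (d₁ - d₂) = integral d₁ - integral d₂ := by
  rw [integral, integral, integral, ← mul_sub]
  congr 1
  ext n
  simp [sub_div]

theorem X_dvd_integral (d : K⟦X⟧) : X ∣ integral d :=
  dvd_mul_right _ _

theorem X_pow_succ_dvd_integral {n : ℕ} {d : K⟦X⟧} (h : X ^ n ∣ d) :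
    X ^ (n + 1) ∣ integral d := by
  rw [pow_succ', integral]
  refine mul_dvd_mul_left X (X_pow_dvd_iff.mpr fun m hm => ?_)
  rw [coeff_mk, X_pow_dvd_iff.mp h m hm, zero_div]

end Integral

end PowerSeries

section Quadrangulation

variable {K : Type*} [Field K]

/-- The equation for `d = q'`, solved for `d` after substituting `q = ∫ d`. -/
noncomputable def quadrangulationOperator (d : K⟦X⟧) : K⟦X⟧ :=
  X * (2 * d ^ 2 + 3 * d + 2) - d * integral d

theorem X_pow_succ_dvd_quadrangulationOperator_sub {n : ℕ} {d₁ d₂ : K⟦X⟧}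
    (h : X ^ n ∣ d₁ - d₂) :
    X ^ (n + 1) ∣ quadrangulationOperator d₁ - quadrangulationOperator d₂ := by
  have hsplit : quadrangulationOperator d₁ - quadrangulationOperator d₂
      = X * ((d₁ - d₂) * (2 * (d₁ + d₂) + 3)) - d₁ * integral (d₁ - d₂)
        - (d₁ - d₂) * integral d₂ := by
    rw [integral_sub, quadrangulationOperator, quadrangulationOperator]
    ring
  rw [hsplit]
  refine dvd_sub (dvd_sub ?_ ?_) ?_
  · rw [pow_succ']
    exact mul_dvd_mul_left X (dvd_mul_of_dvd_left h _)
  · exact dvd_mul_of_dvd_right (X_pow_succ_dvd_integral h) _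
  · rw [pow_succ]
    exact mul_dvd_mul h (X_dvd_integral _)

theorem isFixedPt_quadrangulationOperator_derivative_iff [CharZero K] {q : K⟦X⟧}
    (hq : constantCoeff q = 0) :
    IsFixedPt quadrangulationOperator (d⁄dX K q)
      ↔ X * (2 * (d⁄dX K q) ^ 2 + 3 * d⁄dX K q + 2) = d⁄dX K q * (1 + q) := by
  rw [IsFixedPt, quadrangulationOperator, integral_derivative hq]
  constructor <;> intro h <;> linear_combination h

end Quadrangulation

/-- There is a unique formal power series `q ∈ ℚ⟦X⟧` with zero constant coefficient
satisfying `X·(2·(q')² + 3·q' + 2) = q'·(1 + q)`. -/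
theorem unique_simple_quadrangulation_series :
    ∃! q : PowerSeries ℚ, constantCoeff q = 0 ∧
      X * (2 * (derivativeFun q) ^ 2 + 3 * derivativeFun q + 2)
        = derivativeFun q * (1 + q) := by
  have hD : ∀ q : ℚ⟦X⟧, derivativeFun q = d⁄dX ℚ q := fun _ => rfl
  simp only [hD]
  obtain ⟨d, hd, hd_unique⟩ := existsUnique_isFixedPt_of_contracting
    fun _ _ _ => X_pow_succ_dvd_quadrangulationOperator_sub (K := ℚ)
  refine ⟨integral d, ⟨constantCoeff_integral d, ?_⟩, fun q ⟨hq0, hq⟩ => ?_⟩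
  · rw [← (isFixedPt_quadrangulationOperator_derivative_iff (constantCoeff_integral d)),
      derivative_integral]
    exact hd
  · rw [← integral_derivative hq0,
      hd_unique _ ((isFixedPt_quadrangulationOperator_derivative_iff hq0).mpr hq)]
end

section
/- Let α ∈ ℚ⟦X⟧ be the formal power series with constant coefficient 1 satisfying α = 1 + X·α³ (the generating series of rooted ternary trees). Then the series q := X·(α − 2)·(1 − α) satisfies X·(2·(q')² + 3·q' + 2) = q'·(1 + q), where q' denotes the formal derivative of q. -/
/-!
Differentiating `α = 1 + X α³` gives `α' = α³ + 3 X α² α'`; multiplying by `α` and using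
`X α³ = α - 1` turns this into `α' (3 - 2α) = α⁴`, with no division. It follows that
`q' = 2 (α - 1)`, and with this value of `q'` the claimed equation becomes `2 (X α³ - (α - 1)) = 0`.
-/

open PowerSeries

namespace PowerSeries

variable {R : Type*} [CommRing R] {α : R⟦X⟧}

theorem derivative_mul_three_sub_two_mul_eq_pow_four (hα : α = 1 + X * α ^ 3) :
    d⁄dX R α * (3 - 2 * α) = α ^ 4 := by
  have h := congrArg (d⁄dX R) hα
  simp only [map_add, Derivation.map_one_eq_zero, Derivation.leibniz, Derivation.leibniz_pow,
    derivative_X, smul_eq_mul] at h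
  linear_combination α * h - 3 * d⁄dX R α * hα

theorem derivative_X_mul_sub_two_mul_one_sub (hα : α = 1 + X * α ^ 3) :
    d⁄dX R (X * (α - 2) * (1 - α)) = 2 * (α - 1) := by
  have h2 : d⁄dX R (2 : R⟦X⟧) = 0 := by
    rw [← one_add_one_eq_two, map_add, Derivation.map_one_eq_zero, add_zero]
  simp only [Derivation.leibniz, map_sub, Derivation.map_one_eq_zero, h2, derivative_X,
    smul_eq_mul]
  linear_combination X * derivative_mul_three_sub_two_mul_eq_pow_four hα - α * hα

end PowerSeries

theorem ternary_tree_series_satisfies_quadrangulation_equation_general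
    (α : PowerSeries ℚ)
    (hα : α = 1 + X * α ^ 3) :
    let q : PowerSeries ℚ := X * (α - 2) * (1 - α)
    X * (2 * (derivativeFun q) ^ 2 + 3 * derivativeFun q + 2)
      = derivativeFun q * (1 + q) := by
  intro q
  have hq : derivativeFun q = 2 * (α - 1) := derivative_X_mul_sub_two_mul_one_sub hα
  rw [hq]
  linear_combination (-2) * hα

/-- If `α ∈ ℚ⟦X⟧` has constant coefficient 1 and satisfies `α = 1 + X·α³`
(generating series of rooted ternary trees), then `q := X·(α − 2)·(1 − α)`
satisfies `X·(2·(q')² + 3·q' + 2) = q'·(1 + q)`. -/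
theorem ternary_tree_series_satisfies_quadrangulation_equation
    (α : PowerSeries ℚ) (hα0 : constantCoeff α = 1)
    (hα : α = 1 + X * α ^ 3) :
    let q : PowerSeries ℚ := X * (α - 2) * (1 - α)
    X * (2 * (derivativeFun q) ^ 2 + 3 * derivativeFun q + 2)
      = derivativeFun q * (1 + q) :=
  ternary_tree_series_satisfies_quadrangulation_equation_general α hα
end

section
/- Let α ∈ ℚ⟦X⟧ be the formal power series with constant coefficient 1 satisfying α = 1 + X·α³, and let q := X·(α − 2)·(1 − α). Then for every integer n ≥ 1, the coefficient of X^{n+1} in q equals 4·(3n)! / (n!·(2n+2)!). (This is Tutte's formula for the number of rooted simple quadrangulations with n inner faces.) -/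
/-!
Differentiating `α = 1 + X α³` and eliminating `X α³ = α - 1` gives the first-order equation
`X α' (3 - 2α) = α² - α`. Read coefficientwise, it and its multiple by `α` link the coefficients
`aₙ` of `α` and `cₙ` of `α²` through `(n + 1) cₙ = (3n + 1) aₙ` and
`2 (2n + 3) aₙ₊₁ = 3 (3n + 2) cₙ`. Hence `aₙ = (3n)! / (n! (2n + 1)!)`, and the coefficient of
`X^{n+1}` in `X (α - 2)(1 - α) = X (3α - α² - 2)` is `3aₙ - cₙ = 2aₙ / (n + 1)` for `n ≥ 1`.
-/

open PowerSeries Nat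

theorem PowerSeries.coeff_X_mul_derivative {R : Type*} [CommSemiring R] (f : R⟦X⟧) (n : ℕ) :
    coeff n (X * d⁄dX R f) = n * coeff n f := by
  cases n with
  | zero => simp
  | succ n => rw [coeff_succ_X_mul, coeff_derivative, mul_comm]; push_cast; rfl

namespace TernaryTreeSeries

section CommRing

variable {R : Type*} [CommRing R] {α : R⟦X⟧}

theorem coeff_pow_three (hα : α = 1 + X * α ^ 3) (n : ℕ) :
    coeff n (α ^ 3) = coeff (n + 1) α := by
  conv_rhs => rw [hα]
  simp [coeff_succ_X_mul]

theorem X_mul_derivative_mul_three_sub_two_mul (hα : α = 1 + X * α ^ 3) :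
    X * d⁄dX R α * (3 - 2 * α) = α ^ 2 - α := by
  have hD : d⁄dX R α = α ^ 3 + 3 * X * α ^ 2 * d⁄dX R α := by
    conv_lhs => rw [hα]
    simp
    ring
  linear_combination (X * α) * hD - (α + 3 * X * d⁄dX R α) * hα

theorem succ_mul_coeff_sq (hα : α = 1 + X * α ^ 3) (n : ℕ) :
    (n + 1) * coeff n (α ^ 2) = (3 * n + 1) * coeff n α := by
  have h : C 3 * (X * d⁄dX R α) - X * d⁄dX R (α ^ 2) = α ^ 2 - α := by
    rw [map_ofNat, derivative_pow]
    linear_combination X_mul_derivative_mul_three_sub_two_mul hα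
  have h_coeff := congrArg (coeff n) h
  simp only [map_sub, coeff_C_mul, coeff_X_mul_derivative] at h_coeff
  linear_combination -h_coeff

theorem mul_coeff_succ_eq_mul_coeff_sq (hα : α = 1 + X * α ^ 3) (n : ℕ) :
    2 * (2 * n + 3) * coeff (n + 1) α = 3 * (3 * n + 2) * coeff n (α ^ 2) := by
  have h : C 9 * (X * d⁄dX R (α ^ 2)) - C 4 * (X * d⁄dX R (α ^ 3))
      = C 6 * α ^ 3 - C 6 * α ^ 2 := by
    simp only [map_ofNat, derivative_pow]
    linear_combination 6 * α * X_mul_derivative_mul_three_sub_two_mul hα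
  have h_coeff := congrArg (coeff n) h
  simp only [map_sub, coeff_C_mul, coeff_X_mul_derivative, coeff_pow_three hα] at h_coeff
  linear_combination -h_coeff

theorem mul_coeff_succ_eq_mul_coeff (hα : α = 1 + X * α ^ 3) (n : ℕ) :
    (2 * n + 2) * (2 * n + 3) * coeff (n + 1) α = 3 * (3 * n + 1) * (3 * n + 2) * coeff n α := by
  linear_combination
    (n + 1) * mul_coeff_succ_eq_mul_coeff_sq hα n + 3 * (3 * n + 2) * succ_mul_coeff_sq hα n

end CommRing

theorem coeff_eq_factorial_div {K : Type*} [Field K] [CharZero K] {α : K⟦X⟧}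
    (hα : α = 1 + X * α ^ 3) (n : ℕ) :
    coeff n α = (3 * n)! / (n ! * (2 * n + 1)! : K) := by
  induction n with
  | zero => rw [hα]; simp
  | succ n ih =>
    rw [eq_div_iff (by norm_cast; positivity)] at ih ⊢
    rw [show 3 * (n + 1) = 3 * n + 1 + 1 + 1 by ring,
      show 2 * (n + 1) + 1 = 2 * n + 1 + 1 + 1 by ring,
      factorial_succ (3 * n + 1 + 1), factorial_succ (3 * n + 1), factorial_succ (3 * n),
      factorial_succ n, factorial_succ (2 * n + 1 + 1), factorial_succ (2 * n + 1)]
    push_cast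
    linear_combination (n + 1) * (n ! * (2 * n + 1)! : K) * mul_coeff_succ_eq_mul_coeff hα n
      + 3 * (n + 1) * (3 * n + 1) * (3 * n + 2) * ih

end TernaryTreeSeries

theorem coeff_simple_quadrangulation_series_general
    (α : PowerSeries ℚ)
    (hα : α = 1 + X * α ^ 3) :
    ∀ n : ℕ, 1 ≤ n →
      coeff (n + 1) (X * (α - 2) * (1 - α))
        = 4 * (Nat.factorial (3 * n) : ℚ)
            / ((Nat.factorial n : ℚ) * (Nat.factorial (2 * n + 2) : ℚ)) := by
  intro n hn
  have hq : X * (α - 2) * (1 - α) = X * (C 3 * α - α ^ 2 - C 2) := by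
    simp only [map_ofNat]
    ring
  have hc : coeff n (α ^ 2) = (3 * n + 1) * coeff n α / (n + 1) := by
    rw [eq_div_iff (by positivity)]
    linear_combination TernaryTreeSeries.succ_mul_coeff_sq hα n
  rw [hq, coeff_succ_X_mul, map_sub, map_sub, coeff_C_mul, coeff_C, if_neg (by omega), hc,
    TernaryTreeSeries.coeff_eq_factorial_div hα, factorial_succ (2 * n + 1)]
  field_simp
  push_cast
  ring

/-- With `α = 1 + X·α³`, `α(0) = 1`, and `q := X·(α − 2)·(1 − α)`, the coefficient of
`X^{n+1}` in `q` is `4·(3n)! / (n!·(2n+2)!)` for every `n ≥ 1`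
(Tutte's formula for rooted simple quadrangulations with `n` inner faces). -/
theorem coeff_simple_quadrangulation_series
    (α : PowerSeries ℚ) (hα0 : constantCoeff α = 1)
    (hα : α = 1 + X * α ^ 3) :
    ∀ n : ℕ, 1 ≤ n →
      coeff (n + 1) (X * (α - 2) * (1 - α))
        = 4 * (Nat.factorial (3 * n) : ℚ)
            / ((Nat.factorial n : ℚ) * (Nat.factorial (2 * n + 2) : ℚ)) :=
  coeff_simple_quadrangulation_series_general α hα
end

section
/- If q ∈ ℚ⟦X⟧ has zero constant coefficient and satisfies X·(2·(q')² + 3·q' + 2) = q'·(1 + q), then X·(q' + 2)³ = 4·q', where q' denotes the formal derivative of q. -/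
/-! Write p = q'. Differentiating the equation and eliminating q gives
(p + 1)(p(p + 2) − 2X p'(1 − p)) = 0, and p + 1 is a unit since p(0) = 0. From this first-order
equation for p, the defect u = X(p + 2)³ − 4p satisfies the linear equation
(2 + p) u = 2X(1 − p) u'. Its indicial equation 2 = 2n has the single root n = 1, and the
coefficient of X in u is 8 − 4p₁ = 0, so u = 0. -/

namespace PowerSeries

variable {R : Type*}

@[simp]
theorem derivative_ofNat [CommSemiring R] (n : ℕ) [n.AtLeastTwo] :
    d⁄dX R (ofNat(n) : R⟦X⟧) = 0 := by
  rw [← Nat.cast_ofNat]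
  exact Derivation.map_natCast _ n

theorem X_mul_derivative_X_pow_mul [CommSemiring R] (n : ℕ) (v : R⟦X⟧) :
    X * d⁄dX R (X ^ n * v) = X ^ n * ((n : R⟦X⟧) * v + X * d⁄dX R v) := by
  rcases n with _ | n
  · simp
  · simp only [Derivation.leibniz, derivative_pow, derivative_X, smul_eq_mul]
    push_cast
    ring

theorem eq_zero_of_mul_eq_X_mul_mul_derivative [CommRing R] [IsDomain R] {a b u : R⟦X⟧}
    (h : a * u = X * b * d⁄dX R u)
    (hcoeff : ∀ n : ℕ, constantCoeff a = n * constantCoeff b → coeff n u = 0) : u = 0 := by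
  by_contra hu
  set n := u.order.toNat
  set v := divXPowOrder u
  have hv : constantCoeff v ≠ 0 := by
    rwa [Ne, constantCoeff_divXPowOrder_eq_zero_iff]
  have hu_eq : u = X ^ n * v := X_pow_order_mul_divXPowOrder.symm
  have hv_eq : a * v = b * ((n : R⟦X⟧) * v + X * d⁄dX R v) := by
    have hXn : (X : R⟦X⟧) ^ n ≠ 0 := pow_ne_zero _ X_ne_zero
    apply mul_left_cancel₀ hXn
    rw [hu_eq] at h
    linear_combination h + b * X_mul_derivative_X_pow_mul n v
  have hindicial : constantCoeff a = n * constantCoeff b := by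
    have := congrArg constantCoeff hv_eq
    simp only [map_mul, map_add, map_natCast, constantCoeff_X, zero_mul, add_zero] at this
    exact mul_right_cancel₀ hv (by linear_combination this)
  exact coeff_order hu (hcoeff n hindicial)

theorem cubic_defect_eq [CommRing R] (p : R⟦X⟧)
    (h : p * (p + 2) = 2 * X * d⁄dX R p * (1 - p)) :
    (2 + p) * (X * (p + 2) ^ 3 - 4 * p)
      = X * (2 * (1 - p)) * d⁄dX R (X * (p + 2) ^ 3 - 4 * p) := by
  simp only [map_sub, Derivation.leibniz, derivative_pow, map_add, derivative_X,
    derivative_ofNat, smul_eq_mul]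
  push_cast
  linear_combination (3 * X * (p + 2) ^ 2 - 4) * h

section Quadrangulation

variable [CommRing R] {q : R⟦X⟧}

theorem constantCoeff_derivative_eq_zero (hq0 : constantCoeff q = 0)
    (hq : X * (2 * d⁄dX R q ^ 2 + 3 * d⁄dX R q + 2) = d⁄dX R q * (1 + q)) :
    constantCoeff (d⁄dX R q) = 0 := by
  simpa [hq0] using (congrArg constantCoeff hq).symm

theorem coeff_one_derivative_eq_two (hq0 : constantCoeff q = 0)
    (hq : X * (2 * d⁄dX R q ^ 2 + 3 * d⁄dX R q + 2) = d⁄dX R q * (1 + q)) :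
    coeff 1 (d⁄dX R q) = 2 := by
  have hp0 := constantCoeff_derivative_eq_zero hq0 hq
  have h := congrArg (coeff 1) hq
  rw [coeff_succ_X_mul] at h
  simpa [coeff_mul, Finset.Nat.antidiagonal_succ, hp0, hq0, map_ofNat] using h.symm

theorem derivative_mul_derivative_add_two_eq (hq0 : constantCoeff q = 0)
    (hq : X * (2 * d⁄dX R q ^ 2 + 3 * d⁄dX R q + 2) = d⁄dX R q * (1 + q)) :
    d⁄dX R q * (d⁄dX R q + 2) = 2 * X * d⁄dX R (d⁄dX R q) * (1 - d⁄dX R q) := by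
  set p := d⁄dX R q
  have hD := congrArg (d⁄dX R) hq
  simp only [Derivation.leibniz, derivative_pow, derivative_X, map_add, derivative_ofNat,
    derivative_one, smul_eq_mul] at hD
  have hunit : IsUnit (p + 1) := by
    simp [isUnit_iff_constantCoeff, p, constantCoeff_derivative_eq_zero hq0 hq]
  apply hunit.mul_left_cancel
  linear_combination p * hD - d⁄dX R p * hq

end Quadrangulation

end PowerSeries

open PowerSeries

/-- If `q ∈ ℚ⟦X⟧` has zero constant coefficient and satisfies
`X·(2·(q')² + 3·q' + 2) = q'·(1 + q)`, then `X·(q' + 2)³ = 4·q'`. -/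
theorem quadrangulation_equation_implies_cubic
    (q : PowerSeries ℚ) (hq0 : constantCoeff q = 0)
    (hq : X * (2 * (derivativeFun q) ^ 2 + 3 * derivativeFun q + 2)
        = derivativeFun q * (1 + q)) :
    X * (derivativeFun q + 2) ^ 3 = 4 * derivativeFun q := by
  change X * (2 * d⁄dX ℚ q ^ 2 + 3 * d⁄dX ℚ q + 2) = d⁄dX ℚ q * (1 + q) at hq
  change X * (d⁄dX ℚ q + 2) ^ 3 = 4 * d⁄dX ℚ q
  have hp0 := constantCoeff_derivative_eq_zero hq0 hq
  have hp1 := coeff_one_derivative_eq_two hq0 hq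
  have hdefect := cubic_defect_eq _ (derivative_mul_derivative_add_two_eq hq0 hq)
  rw [← sub_eq_zero]
  refine eq_zero_of_mul_eq_X_mul_mul_derivative hdefect fun n hn => ?_
  have hn1 : n = 1 := by simpa [hp0, map_ofNat] using hn
  subst hn1
  rw [map_sub, coeff_succ_X_mul, ← map_ofNat C 4, coeff_C_mul, hp1]
  norm_num [hp0, map_ofNat]
end

section
/- Let α ∈ ℚ⟦X⟧ be the formal power series with constant coefficient 1 satisfying α = 1 + X·α⁴ (the generating series of rooted quaternary trees); α is a unit in ℚ⟦X⟧. Then the series t := (α − 2)·(1 − α)·α^{−2} satisfies 3·X·(t')² + 1 = (t + 1)·t', where t' denotes the formal derivative of t. -/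
/-!
Differentiating `α = 1 + X·α⁴` gives `α'·(4 - 3α) = α⁵`. Since
`t = -1 + 3α⁻¹ - 2α⁻²`, this makes `t' = (4 - 3α)·α'·α⁻³ = α²`, and then both sides of
the equation equal `3α - 2`: the left one because `X·α⁴ = α - 1`, the right one because
`(t + 1)·α² = 3α - 2`.
-/

open PowerSeries

namespace PowerSeries

variable {R : Type*} [CommRing R]

theorem derivative_mul_eq_pow_of_eq_one_add_X_mul_pow {α : R⟦X⟧} {n : ℕ}
    (h : α = 1 + X * α ^ (n + 1)) :
    d⁄dX R α * (n + 1 - n * α) = α ^ (n + 2) := by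
  have hd : d⁄dX R α = X * (((n : R⟦X⟧) + 1) * α ^ n * d⁄dX R α) + α ^ (n + 1) := by
    conv_lhs => rw [h]
    simp [mul_assoc]
  linear_combination α * hd - ((n : R⟦X⟧) + 1) * d⁄dX R α * h

theorem pow_three_mul_derivative_sub_two_mul_one_sub_mul_sq {α β : R⟦X⟧} (h : α * β = 1) :
    α ^ 3 * d⁄dX R ((α - 2) * (1 - α) * β ^ 2) = (4 - 3 * α) * d⁄dX R α := by
  have hβ : d⁄dX R β = -β ^ 2 * d⁄dX R α := by
    simpa using (d⁄dX R).leibniz_of_mul_eq_one (mul_comm α β ▸ h)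
  have h2 : d⁄dX R (2 : R⟦X⟧) = 0 := by simpa using (d⁄dX R).map_natCast 2
  simp only [Derivation.leibniz, Derivation.leibniz_pow, Derivation.map_sub,
    Derivation.map_one_eq_zero, h2, hβ, smul_eq_mul]
  linear_combination ((3 - 2 * α) * α * d⁄dX R α * (α * β + 1)
    - 2 * (α - 2) * (1 - α) * d⁄dX R α * ((α * β) ^ 2 + α * β + 1)) * h

end PowerSeries

set_option linter.deprecated false in
/-- If `α ∈ ℚ⟦X⟧` has constant coefficient 1 and satisfies `α = 1 + X·α⁴`
(generating series of rooted quaternary trees), then `α` is a unit in `ℚ⟦X⟧`,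
and the series `t := (α − 2)·(1 − α)·α⁻²` satisfies
`3·X·(t')² + 1 = (t + 1)·t'`. -/
theorem quaternary_tree_series_satisfies_triangulation_equation
    (α : PowerSeries ℚ) (hα0 : constantCoeff α = 1)
    (hα : α = 1 + X * α ^ 4) :
    IsUnit α ∧
      (let t : PowerSeries ℚ := (α - 2) * (1 - α) * (α⁻¹) ^ 2
       3 * X * (derivativeFun t) ^ 2 + 1 = (t + 1) * derivativeFun t) := by
  have hinv : α * α⁻¹ = 1 := PowerSeries.mul_inv_cancel α (by simp [hα0])
  have hunit : IsUnit α := .of_mul_eq_one _ hinv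
  refine ⟨hunit, ?_⟩
  intro t
  have hode : d⁄dX ℚ α * (4 - 3 * α) = α ^ 5 := by
    have := derivative_mul_eq_pow_of_eq_one_add_X_mul_pow (n := 3) hα
    norm_num at this
    exact this
  have hderiv : derivativeFun t = α ^ 2 := by
    apply (hunit.pow 3).mul_left_cancel
    change α ^ 3 * d⁄dX ℚ t = _
    rw [pow_three_mul_derivative_sub_two_mul_one_sub_mul_sq hinv]
    linear_combination hode
  rw [hderiv]
  linear_combination -3 * hα + (α - 1) * (α - 2) * (α * α⁻¹ + 1) * hinv
end

section
/- Let α ∈ ℚ⟦X⟧ be the formal power series with constant coefficient 1 satisfying α = 1 + X·α⁴, and let t := (α − 2)·(1 − α)·α^{−2}. Then for every integer n ≥ 1, the coefficient of X^n in t equals 2·(4n−3)! / (n!·(3n−1)!). (This is Tutte's formula for the number of rooted simple triangulations with 2n faces.) -/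
/-!
For the Euler operator `θ = X d/dX`, differentiating `α = 1 + X α⁴` gives
`θ α = α (α - 1) / (4 - 3 α)`, so `θ` maps rational functions of `α` to rational functions
of `α`. In particular `θ t = X α²`, and `α²` satisfies a third-order linear `θ`-differential
equation, which after clearing the denominator `α⁴ (4 - 3α)⁵` is a polynomial identity
in `α`.
Reading off coefficients gives the hypergeometric recurrence
`3 (n+1)(3n+4)(3n+5) bₙ₊₁ = 8 (2n+1)(4n+3)(4n+5) bₙ` for `bₙ = [Xⁿ] α²`, hence
`bₙ = 2 (4n+1)! / (n! (3n+2)!)`, and `n tₙ = bₙ₋₁`.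
-/

open PowerSeries

theorem Derivation.map_ofNat {R A M : Type*} [CommSemiring R] [CommSemiring A] [AddCommMonoid M]
    [Algebra R A] [Module A M] [Module R M] (D : Derivation R A M) (n : ℕ) [n.AtLeastTwo] :
    D (ofNat(n) : A) = 0 := by
  rw [← Nat.cast_ofNat]; exact D.map_natCast n

namespace PowerSeries

variable {R : Type*} [CommSemiring R]

variable (R) in
noncomputable def eulerOperator : Derivation R R⟦X⟧ R⟦X⟧ := (X : R⟦X⟧) • derivative R

theorem eulerOperator_apply (f : R⟦X⟧) : eulerOperator R f = X * derivative R f := rfl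

theorem coeff_eulerOperator (f : R⟦X⟧) (n : ℕ) :
    coeff n (eulerOperator R f) = n * coeff n f := by
  rw [eulerOperator_apply]
  cases n with
  | zero => simp
  | succ n => rw [coeff_succ_X_mul, coeff_derivative, mul_comm]; push_cast; rfl

theorem eulerOperator_X : eulerOperator R X = X := by
  simp [eulerOperator_apply]

theorem coeff_ofNat_mul (m : ℕ) [m.AtLeastTwo] (f : R⟦X⟧) (n : ℕ) :
    coeff n (ofNat(m) * f) = ofNat(m) * coeff n f := by
  rw [← map_ofNat C, coeff_C_mul]

theorem constantCoeff_eq_one_of_eq_one_add_X_mul {α : R⟦X⟧} {k : ℕ}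
    (hα : α = 1 + X * α ^ k) :
    constantCoeff α = 1 := by
  rw [hα]; simp

end PowerSeries

local notation "θ" => PowerSeries.eulerOperator ℚ

namespace QuaternaryTreeSeries

variable {α : ℚ⟦X⟧} (hα : α = 1 + X * α ^ 4)
include hα

theorem four_sub_three_mul_eulerOperator : (4 - 3 * α) * θ α = α * (α - 1) := by
  have h : θ α = X * α ^ 4 + 4 * (X * α ^ 3) * θ α := by
    conv_lhs => rw [hα]
    simp only [map_add, Derivation.map_one_eq_zero, Derivation.leibniz, Derivation.leibniz_pow,
      eulerOperator_X, smul_eq_mul, nsmul_eq_mul]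
    push_cast; ring
  linear_combination α * h - (4 * θ α + α) * hα

theorem four_sub_three_mul_eulerOperator_sq :
    (4 - 3 * α) * θ (α ^ 2) = 2 * α ^ 2 * (α - 1) := by
  rw [Derivation.leibniz_pow]
  simp only [nsmul_eq_mul]
  linear_combination 2 * α * four_sub_three_mul_eulerOperator hα

theorem four_sub_three_pow_add_three_mul_eulerOperator (k : ℕ) {f p p' : ℚ⟦X⟧}
    (hf : (4 - 3 * α) ^ (k + 1) * f = p) (hp : θ p = p' * θ α) :
    (4 - 3 * α) ^ (k + 3) * θ f = α * (α - 1) * ((4 - 3 * α) * p' + 3 * (k + 1) * p) := by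
  have h := congrArg θ hf
  simp only [Derivation.leibniz, Derivation.leibniz_pow, map_sub, Derivation.map_ofNat,
    smul_eq_mul, nsmul_eq_mul, hp, Nat.add_sub_cancel] at h
  push_cast at h
  linear_combination (4 - 3 * α) ^ 2 * h
    + ((4 - 3 * α) * p' + 3 * (k + 1) * (4 - 3 * α) ^ (k + 1) * f)
      * four_sub_three_mul_eulerOperator hα
    + 3 * (k + 1) * α * (α - 1) * hf

theorem four_sub_three_pow_three_mul_eulerOperator_two_sq :
    (4 - 3 * α) ^ 3 * θ (θ (α ^ 2)) = -2 * α ^ 2 * (α - 1) * (6 * α ^ 2 - 15 * α + 8) := by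
  have hp : θ (2 * α ^ 2 * (α - 1)) = (6 * α ^ 2 - 4 * α) * θ α := by
    simp only [Derivation.leibniz, Derivation.leibniz_pow, map_sub, Derivation.map_ofNat,
      Derivation.map_one_eq_zero, smul_eq_mul, nsmul_eq_mul]
    push_cast; ring
  linear_combination four_sub_three_pow_add_three_mul_eulerOperator hα 0 (f := θ (α ^ 2))
    (by simpa using four_sub_three_mul_eulerOperator_sq hα) hp

theorem four_sub_three_pow_five_mul_eulerOperator_three_sq :
    (4 - 3 * α) ^ 5 * θ (θ (θ (α ^ 2)))
      = 2 * α ^ 2 * (α - 1) * (36 * α ^ 4 - 183 * α ^ 3 + 336 * α ^ 2 - 252 * α + 64) := by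
  have hp : θ (-2 * α ^ 2 * (α - 1) * (6 * α ^ 2 - 15 * α + 8))
      = (-60 * α ^ 4 + 168 * α ^ 3 - 138 * α ^ 2 + 32 * α) * θ α := by
    simp only [Derivation.leibniz, Derivation.leibniz_pow, map_sub, map_add, map_neg,
      Derivation.map_ofNat, Derivation.map_one_eq_zero, smul_eq_mul, nsmul_eq_mul]
    push_cast; ring
  linear_combination four_sub_three_pow_add_three_mul_eulerOperator hα 2
    (four_sub_three_pow_three_mul_eulerOperator_two_sq hα) hp

-- `3θ(3θ+1)(3θ+2) α² = 8X(2θ+1)(4θ+3)(4θ+5) α²`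
theorem eulerOperator_ode_sq :
    27 * θ (θ (θ (α ^ 2))) + 27 * θ (θ (α ^ 2)) + 6 * θ (α ^ 2)
      = X * (256 * θ (θ (θ (α ^ 2))) + 640 * θ (θ (α ^ 2)) + 496 * θ (α ^ 2)
        + 120 * α ^ 2) := by
  have hα0 := constantCoeff_eq_one_of_eq_one_add_X_mul hα
  have hunit : α ^ 4 * (4 - 3 * α) ^ 5 ≠ 0 := fun h => by
    have := congrArg constantCoeff h
    norm_num [hα0, map_ofNat] at this
  have h1 := four_sub_three_mul_eulerOperator_sq hα
  have h2 := four_sub_three_pow_three_mul_eulerOperator_two_sq hα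
  have h3 := four_sub_three_pow_five_mul_eulerOperator_three_sq hα
  apply mul_left_cancel₀ hunit
  linear_combination α ^ 4 * (27 * h3 + 27 * (4 - 3 * α) ^ 2 * h2 + 6 * (4 - 3 * α) ^ 4 * h1)
    - X * α ^ 4 * (256 * h3 + 640 * (4 - 3 * α) ^ 2 * h2 + 496 * (4 - 3 * α) ^ 4 * h1)
    + (256 * (2 * α ^ 2 * (α - 1) * (36 * α ^ 4 - 183 * α ^ 3 + 336 * α ^ 2 - 252 * α + 64))
      + 640 * (4 - 3 * α) ^ 2 * (-2 * α ^ 2 * (α - 1) * (6 * α ^ 2 - 15 * α + 8))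
      + 496 * (4 - 3 * α) ^ 4 * (2 * α ^ 2 * (α - 1)) + 120 * (4 - 3 * α) ^ 5 * α ^ 2) * hα

theorem coeff_sq_succ_recurrence (n : ℕ) :
    (3 : ℚ) * (n + 1) * (3 * n + 4) * (3 * n + 5) * coeff (n + 1) (α ^ 2)
      = 8 * (2 * n + 1) * (4 * n + 3) * (4 * n + 5) * coeff n (α ^ 2) := by
  have h := congrArg (coeff (n + 1)) (eulerOperator_ode_sq hα)
  simp only [map_add, coeff_ofNat_mul, coeff_eulerOperator, coeff_succ_X_mul] at h
  push_cast at h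
  linear_combination h

theorem coeff_sq (m : ℕ) :
    coeff m (α ^ 2)
      = 2 * ((4 * m + 1).factorial : ℚ) / (m.factorial * (3 * m + 2).factorial) := by
  induction m with
  | zero => simp [coeff_zero_eq_constantCoeff_apply, constantCoeff_eq_one_of_eq_one_add_X_mul hα]
  | succ m ih =>
    have hc : (3 : ℚ) * (m + 1) * (3 * m + 4) * (3 * m + 5) ≠ 0 := by positivity
    apply mul_left_cancel₀ hc
    rw [coeff_sq_succ_recurrence hα, ih, show 4 * (m + 1) + 1 = 4 * m + 5 by ring,
      show 3 * (m + 1) + 2 = 3 * m + 5 by ring]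
    simp only [Nat.factorial_succ]
    push_cast
    field_simp
    ring

theorem eulerOperator_triangulationSeries :
    θ ((α - 2) * (1 - α) * α⁻¹ ^ 2) = X * α ^ 2 := by
  have hs : α⁻¹ * α = 1 :=
    PowerSeries.inv_mul_cancel α (by simp [constantCoeff_eq_one_of_eq_one_add_X_mul hα])
  have hθs : θ α⁻¹ = -α⁻¹ ^ 2 * θ α := by
    rw [eulerOperator_apply, eulerOperator_apply, derivative_inv']; ring
  simp only [Derivation.leibniz, Derivation.leibniz_pow, map_sub, Derivation.map_ofNat,
    Derivation.map_one_eq_zero, smul_eq_mul, nsmul_eq_mul, hθs]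
  push_cast
  linear_combination
    (α⁻¹ ^ 2 * (α - 1) - α⁻¹ ^ 2 * θ α * (3 - 2 * α) + X * α ^ 2 * (α * α⁻¹ + 1)) * hs
    + α⁻¹ ^ 3 * four_sub_three_mul_eulerOperator hα + α⁻¹ ^ 2 * hα

end QuaternaryTreeSeries

theorem coeff_simple_triangulation_series_general
    (α : PowerSeries ℚ)
    (hα : α = 1 + X * α ^ 4) :
    ∀ n : ℕ, 1 ≤ n →
      coeff n ((α - 2) * (1 - α) * (α⁻¹) ^ 2)
        = 2 * (Nat.factorial (4 * n - 3) : ℚ)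
            / ((Nat.factorial n : ℚ) * (Nat.factorial (3 * n - 1) : ℚ)) := by
  intro n hn
  obtain ⟨m, rfl⟩ : ∃ m, n = m + 1 := ⟨n - 1, by omega⟩
  have h := congrArg (coeff (m + 1)) (QuaternaryTreeSeries.eulerOperator_triangulationSeries hα)
  rw [coeff_eulerOperator, coeff_succ_X_mul, QuaternaryTreeSeries.coeff_sq hα] at h
  rw [show 4 * (m + 1) - 3 = 4 * m + 1 by omega, show 3 * (m + 1) - 1 = 3 * m + 2 by omega,
    Nat.factorial_succ m]
  push_cast at h ⊢
  field_simp at h ⊢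
  linear_combination h

/-- With `α = 1 + X·α⁴`, `α(0) = 1`, and `t := (α − 2)·(1 − α)·α⁻²`, the coefficient
of `X^n` in `t` equals `2·(4n−3)! / (n!·(3n−1)!)` for every `n ≥ 1`
(Tutte's formula for rooted simple triangulations with `2n` faces). -/
theorem coeff_simple_triangulation_series
    (α : PowerSeries ℚ) (hα0 : constantCoeff α = 1)
    (hα : α = 1 + X * α ^ 4) :
    ∀ n : ℕ, 1 ≤ n →
      coeff n ((α - 2) * (1 - α) * (α⁻¹) ^ 2)
        = 2 * (Nat.factorial (4 * n - 3) : ℚ)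
            / ((Nat.factorial n : ℚ) * (Nat.factorial (3 * n - 1) : ℚ)) :=
  coeff_simple_triangulation_series_general α hα
end

section
/- Let α ∈ ℚ⟦X⟧ be the formal power series with constant coefficient 1 satisfying α = 1 + X·α⁴, and let t := (α − 2)·(1 − α)·α^{−2}. Then the formal derivative of t equals α². -/
/-!
Writing `t = 3 α⁻¹ - 2 α⁻² - 1` gives `t' = α' (4 - 3α) α⁻³`. Differentiating `α = 1 + X α⁴`
and eliminating `X α⁴ = α - 1` gives `α' (4 - 3α) = α⁵`, so `t' = α⁵ α⁻³ = α²`.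
-/

open PowerSeries

theorem PowerSeries.derivative_mul_four_sub_three_mul_eq_pow_five
    {R : Type*} [CommRing R] {α : R⟦X⟧} (hα : α = 1 + X * α ^ 4) :
    d⁄dX R α * (4 - 3 * α) = α ^ 5 := by
  have hX : X * α ^ 4 = α - 1 := by linear_combination -hα
  have hD : d⁄dX R α = α ^ 4 + X * (4 * α ^ 3 * d⁄dX R α) := by
    conv_lhs => rw [hα]
    simp only [map_add, derivative_one, Derivation.leibniz, Derivation.leibniz_pow, derivative_X,
      smul_eq_mul, nsmul_eq_mul]
    ring
  linear_combination α * hD + 4 * d⁄dX R α * hX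

theorem PowerSeries.derivative_sub_two_mul_one_sub_mul_inv_sq {k : Type*} [Field k]
    {α : k⟦X⟧} (hα : constantCoeff α ≠ 0) :
    d⁄dX k ((α - 2) * (1 - α) * α⁻¹ ^ 2) = d⁄dX k α * (4 - 3 * α) * α⁻¹ ^ 3 := by
  have hinv : α * α⁻¹ = 1 := PowerSeries.mul_inv_cancel α hα
  have hsplit : (α - 2) * (1 - α) * α⁻¹ ^ 2 = 3 * α⁻¹ - 2 * α⁻¹ ^ 2 - 1 := by
    linear_combination (3 * α⁻¹ - α * α⁻¹ - 1) * hinv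
  have hconst (n : ℕ) [n.AtLeastTwo] : d⁄dX k (OfNat.ofNat n : k⟦X⟧) = 0 :=
    (d⁄dX k).map_natCast n
  rw [hsplit]
  simp only [map_sub, Derivation.leibniz, Derivation.leibniz_pow, derivative_inv',
    derivative_one, hconst, smul_eq_mul]
  linear_combination 3 * α⁻¹ ^ 2 * d⁄dX k α * hinv

/-- With `α = 1 + X·α⁴`, `α(0) = 1`, and `t := (α − 2)·(1 − α)·α⁻²`, the formal
derivative of `t` equals `α²`. -/
theorem derivative_simple_triangulation_series
    (α : PowerSeries ℚ) (hα0 : constantCoeff α = 1)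
    (hα : α = 1 + X * α ^ 4) :
    derivativeFun ((α - 2) * (1 - α) * (α⁻¹) ^ 2) = α ^ 2 := by
  have hcoeff : constantCoeff α ≠ 0 := by simp [hα0]
  have hinv : α * α⁻¹ = 1 := PowerSeries.mul_inv_cancel α hcoeff
  change d⁄dX ℚ _ = _
  calc d⁄dX ℚ ((α - 2) * (1 - α) * α⁻¹ ^ 2)
      = d⁄dX ℚ α * (4 - 3 * α) * α⁻¹ ^ 3 := derivative_sub_two_mul_one_sub_mul_inv_sq hcoeff
    _ = α ^ 5 * α⁻¹ ^ 3 := by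
        rw [derivative_mul_four_sub_three_mul_eq_pow_five hα]
    _ = α ^ 2 := by linear_combination α ^ 2 * (α ^ 2 * α⁻¹ ^ 2 + α * α⁻¹ + 1) * hinv
end

section
/- If t ∈ ℚ⟦X⟧ has zero constant coefficient and satisfies 3·X·(t')² + 1 = (t + 1)·t', then (X·(t')² + 1)² = t', where t' denotes the formal derivative of t. -/
/-!
Write `u = t'`. Differentiating the equation and eliminating `t` (multiply the equation by `u'`
and the derivative by `u`) gives the first-order ODE `(1 - 3Xu²) u' = 2u³`, which no longer
involves `t`. Along it, the residual `D = (Xu² + 1)² - u` satisfies the linear ODE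
`(1 - 3Xu²) D' = 2u² D`, and `D(0) = 0` because `u(0) = 1`. A linear ODE with invertible
leading coefficient has only the zero solution vanishing at `0`, as one sees coefficient by
coefficient, so `D = 0`.
-/

open PowerSeries

namespace PowerSeries

variable {R : Type*} [CommRing R]

theorem eq_zero_of_derivative_eq_mul_self [IsAddTorsionFree R] {c f : R⟦X⟧}
    (hf : d⁄dX R f = c * f) (h0 : constantCoeff f = 0) : f = 0 := by
  ext n
  induction n using Nat.strong_induction_on with
  | _ n ih =>
    cases n with
    | zero => simpa using h0
    | succ n =>
      have hcoeff : (n + 1) • coeff (n + 1) f = 0 := by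
        rw [nsmul_eq_mul', Nat.cast_succ, ← coeff_derivative, hf, coeff_mul]
        refine Finset.sum_eq_zero fun p hp => ?_
        rw [ih p.2 (Nat.lt_succ_of_le (Finset.HasAntidiagonal.antidiagonal.snd_le hp)),
          map_zero, mul_zero]
      exact (nsmul_eq_zero_iff.mp hcoeff).resolve_right n.succ_ne_zero

theorem eq_zero_of_mul_derivative_eq_mul_self [IsAddTorsionFree R] {w c f : R⟦X⟧}
    (hw : IsUnit (constantCoeff w)) (hf : w * d⁄dX R f = c * f) (h0 : constantCoeff f = 0) :
    f = 0 := by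
  obtain ⟨w, rfl⟩ := isUnit_iff_constantCoeff.mpr hw
  refine eq_zero_of_derivative_eq_mul_self (c := ((w⁻¹ : R⟦X⟧ˣ) : R⟦X⟧) * c) ?_ h0
  rw [mul_assoc, ← hf, Units.inv_mul_cancel_left]

theorem one_sub_mul_derivative_quartic_residual {u : R⟦X⟧}
    (hu : (1 - 3 * X * u ^ 2) * d⁄dX R u = 2 * u ^ 3) :
    (1 - 3 * X * u ^ 2) * d⁄dX R ((X * u ^ 2 + 1) ^ 2 - u) =
      2 * u ^ 2 * ((X * u ^ 2 + 1) ^ 2 - u) := by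
  have hderiv : d⁄dX R ((X * u ^ 2 + 1) ^ 2 - u) =
      2 * (X * u ^ 2 + 1) * (u ^ 2 + 2 * X * u * d⁄dX R u) - d⁄dX R u := by
    simp only [map_sub, map_add, Derivation.leibniz_pow, Derivation.leibniz, smul_eq_mul,
      nsmul_eq_mul, derivative_X, derivative_one]
    ring
  rw [hderiv]
  linear_combination (4 * X * u * (X * u ^ 2 + 1) - 1) * hu

section Triangulation

variable {t : R⟦X⟧} (ht : 3 * X * (d⁄dX R t) ^ 2 + 1 = (t + 1) * d⁄dX R t)
include ht

theorem constantCoeff_derivative_of_triangulation (ht0 : constantCoeff t = 0) :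
    constantCoeff (d⁄dX R t) = 1 := by
  simpa [ht0] using (congrArg constantCoeff ht).symm

theorem one_sub_mul_derivative_derivative_of_triangulation [IsDomain R]
    (ht0 : constantCoeff t = 0) :
    (1 - 3 * X * (d⁄dX R t) ^ 2) * d⁄dX R (d⁄dX R t) = 2 * (d⁄dX R t) ^ 3 := by
  have hu0 := constantCoeff_derivative_of_triangulation ht ht0
  set u := d⁄dX R t
  have hu : u ≠ 0 := fun h => by simp [h] at hu0
  have hdiff : 3 * u ^ 2 + 6 * X * u * d⁄dX R u = u ^ 2 + (t + 1) * d⁄dX R u := by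
    have hd3 : d⁄dX R (3 : R⟦X⟧) = 0 := by exact_mod_cast (d⁄dX R).map_natCast 3
    have := congrArg (d⁄dX R) ht
    simp only [map_add, Derivation.leibniz_pow, Derivation.leibniz, smul_eq_mul, nsmul_eq_mul,
      derivative_X, derivative_one, hd3] at this
    linear_combination this
  apply mul_right_cancel₀ hu
  linear_combination (u * d⁄dX R u) * ht - u ^ 2 * hdiff

end Triangulation

end PowerSeries

/-- If `t ∈ ℚ⟦X⟧` has zero constant coefficient and satisfies
`3·X·(t')² + 1 = (t + 1)·t'`, then `(X·(t')² + 1)² = t'`. -/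
theorem triangulation_equation_implies_quartic
    (t : PowerSeries ℚ) (ht0 : constantCoeff t = 0)
    (ht : 3 * X * (derivativeFun t) ^ 2 + 1 = (t + 1) * derivativeFun t) :
    (X * (derivativeFun t) ^ 2 + 1) ^ 2 = derivativeFun t := by
  change 3 * X * (d⁄dX ℚ t) ^ 2 + 1 = (t + 1) * d⁄dX ℚ t at ht
  change (X * (d⁄dX ℚ t) ^ 2 + 1) ^ 2 = d⁄dX ℚ t
  have hunit : IsUnit (constantCoeff (1 - 3 * X * (d⁄dX ℚ t) ^ 2)) := by simp
  rw [← sub_eq_zero]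
  exact eq_zero_of_mul_derivative_eq_mul_self hunit
    (one_sub_mul_derivative_quartic_residual
      (one_sub_mul_derivative_derivative_of_triangulation ht ht0))
    (by simp [constantCoeff_derivative_of_triangulation ht ht0])
end

section
/- If t ∈ ℚ⟦X⟧ has zero constant coefficient and satisfies 3·X·(t')² + 1 = (t + 1)·t', then t''·(3·X·(t')² − 1) + 2·(t')³ = 0, where t' and t'' denote the first and second formal derivatives of t. -/
/-!
Differentiating `3·X·(t')² + 1 = (t + 1)·t'` gives `3·(t')² + 6·X·t'·t'' = (t')² + (t + 1)·t''`.
Multiplying by `t'` and substituting `(t + 1)·t' = 3·X·(t')² + 1` eliminates `t` itself.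
This uses only the Leibniz rule and `X' = 1`, so it holds for any derivation.
-/

open PowerSeries

namespace Derivation

variable {R A : Type*} [CommSemiring R] [CommRing A] [Algebra R A] (D : Derivation R A A)
  {x t : A}

theorem triangulation_eq_derivative (hx : D x = 1)
    (ht : 3 * x * D t ^ 2 + 1 = (t + 1) * D t) :
    3 * D t ^ 2 + 6 * x * D t * D (D t) = D t ^ 2 + (t + 1) * D (D t) := by
  have h3 : D (3 : A) = 0 := by exact_mod_cast D.map_natCast 3
  have h := congrArg D ht
  simp only [map_add, leibniz, leibniz_pow, map_one_eq_zero, hx, h3, smul_eq_mul] at h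
  linear_combination h

theorem triangulation_eq_second_order (hx : D x = 1)
    (ht : 3 * x * D t ^ 2 + 1 = (t + 1) * D t) :
    D (D t) * (3 * x * D t ^ 2 - 1) + 2 * D t ^ 3 = 0 := by
  linear_combination D t * D.triangulation_eq_derivative hx ht - D (D t) * ht

end Derivation

set_option linter.deprecated false in
theorem triangulation_equation_derived_general
    (t : PowerSeries ℚ)
    (ht : 3 * X * (derivativeFun t) ^ 2 + 1 = (t + 1) * derivativeFun t) :
    derivativeFun (derivativeFun t) * (3 * X * (derivativeFun t) ^ 2 - 1)
      + 2 * (derivativeFun t) ^ 3 = 0 :=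
  (d⁄dX ℚ).triangulation_eq_second_order derivative_X ht

/-- If `t ∈ ℚ⟦X⟧` has zero constant coefficient and satisfies
`3·X·(t')² + 1 = (t + 1)·t'`, then `t''·(3·X·(t')² − 1) + 2·(t')³ = 0`. -/
theorem triangulation_equation_derived
    (t : PowerSeries ℚ) (ht0 : constantCoeff t = 0)
    (ht : 3 * X * (derivativeFun t) ^ 2 + 1 = (t + 1) * derivativeFun t) :
    derivativeFun (derivativeFun t) * (3 * X * (derivativeFun t) ^ 2 - 1)
      + 2 * (derivativeFun t) ^ 3 = 0 :=
  triangulation_equation_derived_general t ht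
end

section
/- Let P ∈ ℚ⟦X⟧ be the formal power series with constant coefficient 1 satisfying P = 1 + 3·X·P², and let y := X·(P·(4 − P)/3)² ∈ ℚ⟦X⟧, a series with zero constant coefficient. Let Q ∈ ℚ⟦T⟧ be the formal power series with constant coefficient 1 satisfying Q = 1 + T·Q³. Then y = ((P−1)/3)·((4−P)/3)², and the substitution of y into Q equals 3·(4 − P)^{−1} in ℚ⟦X⟧ (the series 4 − P has constant coefficient 3 and hence is invertible). -/
/-!
Substituting a series `y` with `y(0) = 0` is a ring endomorphism of `ℚ⟦X⟧`, so `S := Q(y)`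
satisfies `S = 1 + y S³`. Using `P = 1 + 3XP²`, the series `3 / (4 - P)` satisfies the same
equation, which has only one solution because `y(0) = 0`.
-/

open PowerSeries

/-- Substitution of the power series `f` (assumed to have zero constant coefficient)
into the power series `g`: the coefficient of `X^n` in `g ∘ f` only depends on the
truncation of `g` at order `n + 1`. -/
noncomputable def substInto (f g : PowerSeries ℚ) : PowerSeries ℚ :=
  PowerSeries.mk fun n =>
    PowerSeries.coeff n (Polynomial.aeval f (PowerSeries.trunc (n + 1) g))

section Aeval

variable {R : Type*} [CommRing R] {f : R⟦X⟧}

theorem coeff_aeval_congr (hf : constantCoeff f = 0) {p q : Polynomial R} {n : ℕ}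
    (h : ∀ k ≤ n, p.coeff k = q.coeff k) :
    coeff n (Polynomial.aeval f p) = coeff n (Polynomial.aeval f q) := by
  obtain ⟨r, hr⟩ : Polynomial.X ^ (n + 1) ∣ p - q :=
    Polynomial.X_pow_dvd_iff.mpr fun k hk => by
      rw [Polynomial.coeff_sub, h k (Nat.lt_succ_iff.mp hk), sub_self]
  have hdvd : (X : R⟦X⟧) ^ (n + 1) ∣ Polynomial.aeval f p - Polynomial.aeval f q := by
    rw [← map_sub, hr, map_mul, map_pow, Polynomial.aeval_X]
    exact (pow_dvd_pow_of_dvd (X_dvd_iff.mpr hf) _).mul_right _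
  rw [← sub_eq_zero, ← map_sub]
  exact X_pow_dvd_iff.mp hdvd n n.lt_succ_self

end Aeval

section SubstInto

variable {f : ℚ⟦X⟧}

theorem coeff_substInto_eq_coeff_aeval_trunc (hf : constantCoeff f = 0) (g : ℚ⟦X⟧)
    {n m : ℕ} (h : n < m) :
    coeff n (substInto f g) = coeff n (Polynomial.aeval f (trunc m g)) := by
  rw [substInto, coeff_mk]
  refine coeff_aeval_congr hf fun k hk => ?_
  rw [coeff_trunc, coeff_trunc, if_pos (Nat.lt_succ_of_le hk), if_pos (hk.trans_lt h)]

theorem substInto_X (hf : constantCoeff f = 0) : substInto f X = f := by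
  ext n
  rw [coeff_substInto_eq_coeff_aeval_trunc hf X (show n < n + 2 by omega), trunc_X,
    Polynomial.aeval_X]

theorem substInto_mul (hf : constantCoeff f = 0) (g h : ℚ⟦X⟧) :
    substInto f (g * h) = substInto f g * substInto f h := by
  ext n
  have htrunc : coeff n (Polynomial.aeval f (trunc (n + 1) (g * h))) =
      coeff n (Polynomial.aeval f (trunc (n + 1) g * trunc (n + 1) h)) :=
    coeff_aeval_congr hf fun k hk => by
      rw [coeff_trunc, if_pos (Nat.lt_succ_of_le hk),
        coeff_mul_eq_coeff_trunc_mul_trunc g h (Nat.lt_succ_of_le hk),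
        ← Polynomial.coeff_coe, Polynomial.coe_mul]
  rw [substInto, coeff_mk, htrunc, map_mul, coeff_mul, coeff_mul]
  refine Finset.sum_congr rfl fun ij hij => ?_
  obtain ⟨hi, hj⟩ : ij.1 < n + 1 ∧ ij.2 < n + 1 := by
    have := Finset.HasAntidiagonal.mem_antidiagonal.mp hij
    omega
  rw [coeff_substInto_eq_coeff_aeval_trunc hf g hi, coeff_substInto_eq_coeff_aeval_trunc hf h hj]

noncomputable def substIntoRingHom (hf : constantCoeff f = 0) : ℚ⟦X⟧ →+* ℚ⟦X⟧ where
  toFun := substInto f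
  map_one' := by ext n; simp [substInto]
  map_mul' := substInto_mul hf
  map_zero' := by ext n; simp [substInto]
  map_add' g h := by ext n; simp [substInto]

theorem coe_substIntoRingHom (hf : constantCoeff f = 0) : ⇑(substIntoRingHom hf) = substInto f :=
  rfl

end SubstInto

/-- The difference of two solutions is killed by the unit `1 - y (S² + S T + T²)`. -/
theorem PowerSeries.eq_of_eq_one_add_mul_pow_three {R : Type*} [CommRing R] {y S T : R⟦X⟧}
    (hy : constantCoeff y = 0) (hS : S = 1 + y * S ^ 3) (hT : T = 1 + y * T ^ 3) : S = T := by
  have hunit : IsUnit (1 - y * (S ^ 2 + S * T + T ^ 2)) :=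
    isUnit_iff_constantCoeff.mpr (by simp [hy])
  have hprod : (S - T) * (1 - y * (S ^ 2 + S * T + T ^ 2)) = 0 := by
    linear_combination hS - hT
  exact sub_eq_zero.mp ((hunit.mul_left_eq_zero).mp hprod)

section Quadrangulations

variable {A : Type*} [CommRing A] {p x t : A}

theorem quad_change_of_variables (ht : 3 * t = 1) (hp : p = 1 + 3 * x * p ^ 2) :
    x * (p * (4 - p) * t) ^ 2 = (p - 1) * t * ((4 - p) * t) ^ 2 := by
  linear_combination (-(x * p ^ 2 * (4 - p) ^ 2 * t ^ 2)) * ht + (-(t ^ 3 * (4 - p) ^ 2)) * hp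

/-- `3 / (4 - p)` solves the equation of `Q` in the variable `x (p (4 - p) / 3)²`: since
`9 t² = 1` and `(4 - p)² r² = 1`, the right-hand side is `1 + 3 x p² r = 1 + (p - 1) r`. -/
theorem three_mul_eq_one_add_mul_pow_three {r : A} (ht : 3 * t = 1)
    (hr : (4 - p) * r = 1) (hp : p = 1 + 3 * x * p ^ 2) :
    3 * r = 1 + x * (p * (4 - p) * t) ^ 2 * (3 * r) ^ 3 := by
  linear_combination (-(3 * x * p ^ 2 * r * (4 - p) ^ 2 * r ^ 2 * (3 * t + 1))) * ht
    + (1 - 3 * x * p ^ 2 * r * ((4 - p) * r + 1)) * hr + r * hp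

end Quadrangulations

theorem subst_quad_to_simple_quad_general
    (P Q : PowerSeries ℚ)
    (hP0 : constantCoeff P = 1) (hP : P = 1 + 3 * X * P ^ 2)
    (hQ : Q = 1 + X * Q ^ 3) :
    letI y : PowerSeries ℚ := X * (P * (4 - P) * (3 : PowerSeries ℚ)⁻¹) ^ 2
    y = ((P - 1) * (3 : PowerSeries ℚ)⁻¹) * ((4 - P) * (3 : PowerSeries ℚ)⁻¹) ^ 2 ∧
      substInto y Q = 3 * (4 - P)⁻¹ := by
  set y : ℚ⟦X⟧ := X * (P * (4 - P) * 3⁻¹) ^ 2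
  have h3 : (3 : ℚ⟦X⟧) * 3⁻¹ = 1 := PowerSeries.mul_inv_cancel _ (by rw [map_ofNat]; norm_num)
  have h4P : (4 - P) * (4 - P)⁻¹ = 1 :=
    PowerSeries.mul_inv_cancel _ (by rw [map_sub, hP0, map_ofNat]; norm_num)
  have hy0 : constantCoeff y = 0 := by simp [y]
  refine ⟨quad_change_of_variables h3 hP, ?_⟩
  have hS : substInto y Q = 1 + y * substInto y Q ^ 3 := by
    have := congrArg (substIntoRingHom hy0) hQ
    rwa [map_add, map_one, map_mul, map_pow, coe_substIntoRingHom, substInto_X hy0] at this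
  exact eq_of_eq_one_add_mul_pow_three hy0 hS
    (three_mul_eq_one_add_mul_pow_three h3 h4P hP)

/-- Let `P(0) = 1`, `P = 1 + 3XP²`, and `y := X·(P·(4−P)/3)²`; let `Q(0) = 1` with
`Q = 1 + T·Q³`. Then `y = ((P−1)/3)·((4−P)/3)²` and substituting `y` into `Q`
gives `3·(4 − P)⁻¹`. -/
theorem subst_quad_to_simple_quad
    (P Q : PowerSeries ℚ)
    (hP0 : constantCoeff P = 1) (hP : P = 1 + 3 * X * P ^ 2)
    (hQ0 : constantCoeff Q = 1) (hQ : Q = 1 + X * Q ^ 3) :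
    letI y : PowerSeries ℚ := X * (P * (4 - P) * (3 : PowerSeries ℚ)⁻¹) ^ 2
    y = ((P - 1) * (3 : PowerSeries ℚ)⁻¹) * ((4 - P) * (3 : PowerSeries ℚ)⁻¹) ^ 2 ∧
      substInto y Q = 3 * (4 - P)⁻¹ :=
  subst_quad_to_simple_quad_general P Q hP0 hP hQ
end

section
/- Let Q ∈ ℚ⟦X⟧ be the formal power series with constant coefficient 1 satisfying Q = 1 + X·Q³, and let g := 3·Q − Q² − 2 ∈ ℚ⟦X⟧, a series with zero constant coefficient. Let R ∈ ℚ⟦T⟧ be the formal power series with zero constant coefficient satisfying R = T + R². Then the substitution of g into R equals Q − 1 in ℚ⟦X⟧. -/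
open PowerSeries

/-!
`R` is the compositional inverse of `T - T²`, and `g = (Q - 1) - (Q - 1)²` holds identically
in `Q`. Hence `R ∘ g` and `Q - 1` both solve `Y = g + Y²` with `Y(0) = 0`, whose solution is
unique: two solutions differ by `D` with `D = (Y + Z) D`, and `Y + Z` has no constant term.
-/

namespace PowerSeries

variable {R : Type*} [CommRing R]

theorem eq_zero_of_eq_mul_of_constantCoeff_eq_zero {u D : R⟦X⟧} (hu : constantCoeff u = 0)
    (h : D = u * D) : D = 0 := by
  by_contra hD
  have hDfin : order D ≠ ⊤ := order_eq_top.not.mpr hD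
  have hu1 : 1 ≤ order u :=
    Order.one_le_iff_ne_zero.mpr (order_ne_zero_iff_constCoeff_eq_zero.mpr hu)
  have : order D + 1 ≤ order D :=
    calc order D + 1 ≤ order u + order D := by rw [add_comm]; gcongr
      _ ≤ order (u * D) := le_order_mul u D
      _ = order D := by rw [← h]
  exact lt_irrefl _ ((ENat.add_one_le_iff hDfin).mp this)

theorem eq_of_eq_add_sq {a Y Z : R⟦X⟧} (hY0 : constantCoeff Y = 0) (hZ0 : constantCoeff Z = 0)
    (hY : Y = a + Y ^ 2) (hZ : Z = a + Z ^ 2) : Y = Z := by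
  have hdiff : Y - Z = (Y + Z) * (Y - Z) := by linear_combination hY - hZ
  refine sub_eq_zero.mp (eq_zero_of_eq_mul_of_constantCoeff_eq_zero ?_ hdiff)
  simp [hY0, hZ0]

theorem coeff_subst_eq_coeff_aeval_trunc {f : R⟦X⟧} (hf : constantCoeff f = 0) (g : R⟦X⟧)
    (n : ℕ) : coeff n (g.subst f) = coeff n (Polynomial.aeval f (trunc (n + 1) g)) := by
  have hf' : HasSubst f := HasSubst.of_constantCoeff_zero' hf
  have htail : ((n + 1 : ℕ) : ℕ∞) ≤ order (g - (trunc (n + 1) g : R⟦X⟧)) := by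
    refine nat_le_order _ _ fun i hi => ?_
    rw [map_sub, Polynomial.coeff_coe, coeff_trunc, if_pos hi, sub_self]
  have hsubst : coeff n ((g - (trunc (n + 1) g : R⟦X⟧)).subst f) = 0 :=
    coeff_of_lt_order n ((ENat.natCast_lt_natCast.mpr n.lt_succ_self).trans_le
      (htail.trans (le_order_subst_left' hf)))
  rwa [subst_sub hf', subst_coe hf', map_sub, sub_eq_zero] at hsubst

end PowerSeries

theorem substInto_eq_subst {f : PowerSeries ℚ} (hf : constantCoeff f = 0) (g : PowerSeries ℚ) :
    substInto f g = g.subst f := by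
  ext n
  rw [substInto, coeff_mk, coeff_subst_eq_coeff_aeval_trunc hf]

theorem subst_simple_quad_to_irreducible_quad_general
    (Q R : PowerSeries ℚ)
    (hQ0 : constantCoeff Q = 1)
    (hR0 : constantCoeff R = 0) (hR : R = X + R ^ 2) :
    substInto (3 * Q - Q ^ 2 - 2) R = Q - 1 := by
  set g := 3 * Q - Q ^ 2 - 2 with g_def
  have hg0 : constantCoeff g = 0 := by
    simp only [g_def, map_sub, map_mul, map_pow, hQ0, map_ofNat]
    norm_num
  have hg : HasSubst g := HasSubst.of_constantCoeff_zero' hg0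
  rw [substInto_eq_subst hg0]
  refine eq_of_eq_add_sq (a := g) (constantCoeff_subst_eq_zero hg0 R hR0) (by simp [hQ0]) ?_
    (by ring)
  conv_lhs => rw [hR]
  rw [subst_add hg, subst_X hg, subst_pow hg]

/-- Let `Q(0) = 1` with `Q = 1 + X·Q³` and `g := 3Q − Q² − 2`; let `R(0) = 0` with
`R = T + R²`. Then substituting `g` into `R` gives `Q − 1`. -/
theorem subst_simple_quad_to_irreducible_quad
    (Q R : PowerSeries ℚ)
    (hQ0 : constantCoeff Q = 1) (hQ : Q = 1 + X * Q ^ 3)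
    (hR0 : constantCoeff R = 0) (hR : R = X + R ^ 2) :
    substInto (3 * Q - Q ^ 2 - 2) R = Q - 1 :=
  subst_simple_quad_to_irreducible_quad_general Q R hQ0 hR0 hR
end

section
/- Let P ∈ ℚ⟦X⟧ be the formal power series with constant coefficient 1 satisfying P² = 1 + 8·X·P³, and let y := X·(P·(9 − P²)/8)³ ∈ ℚ⟦X⟧. Let W ∈ ℚ⟦X⟧ be the unique formal power series with zero constant coefficient satisfying (P² − 1)·(W + 1)² = 8·W, and let Y ∈ ℚ⟦T⟧ be the unique formal power series with zero constant coefficient satisfying Q·(Y + 1)² = Y, where Q ∈ ℚ⟦T⟧ has zero constant coefficient and satisfies Q·(1 − Q)³ = T. Then the substitution of y into Y equals W in ℚ⟦X⟧. -/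
/-!
Put `R := X·P³`. The equation of `P` says `P² − 1 = 8R`, and then `y = R·(1 − R)³`.
Substituting `y` is a ring homomorphism sending `X` to `y` and preserving vanishing
constant coefficients, so `Q ∘ y` is a root of `A·(1 − A)³ = R·(1 − R)³` without constant
term; this equation has the unique such root `R`, because the cofactor of `A − R` is a unit.
Hence `Y ∘ y` and `W` both solve `R·(Z + 1)² = Z`, whose solution is unique because
`R(0) = 0`.
-/

open PowerSeries

namespace PowerSeries

section CommRing

variable {R : Type*} [CommRing R]

theorem coeff_pow_eq_zero_of_lt {f : R⟦X⟧} (hf : constantCoeff f = 0) {n d : ℕ} (h : n < d) :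
    coeff n (f ^ d) = 0 :=
  X_pow_dvd_iff.mp (pow_dvd_pow_of_dvd (X_dvd_iff.mpr hf) d) n h

theorem eq_of_sub_mul_eq_zero {A B E : R⟦X⟧} (hE : IsUnit (constantCoeff E))
    (h : (A - B) * E = 0) : A = B :=
  sub_eq_zero.mp ((isUnit_iff_constantCoeff.mpr hE).mul_left_eq_zero.mp h)

theorem eq_of_mul_one_sub_pow_three_eq {A B : R⟦X⟧} (hA : constantCoeff A = 0)
    (hB : constantCoeff B = 0) (h : A * (1 - A) ^ 3 = B * (1 - B) ^ 3) : A = B :=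
  eq_of_sub_mul_eq_zero (E := 1 - 3 * (A + B) + 3 * (A ^ 2 + A * B + B ^ 2)
      - (A ^ 3 + A ^ 2 * B + A * B ^ 2 + B ^ 3)) (by simp [hA, hB])
    (by linear_combination h)

theorem eq_of_mul_add_one_sq_eq {Q Y Z : R⟦X⟧} (hQ : constantCoeff Q = 0)
    (hY : Q * (Y + 1) ^ 2 = Y) (hZ : Q * (Z + 1) ^ 2 = Z) : Y = Z :=
  eq_of_sub_mul_eq_zero (E := Q * (Y + Z + 2) - 1) (by simp [hQ])
    (by linear_combination hY - hZ)

end CommRing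

theorem eight_mul_inv_eight {K : Type*} [Field K] [CharZero K] : (8 : K⟦X⟧) * 8⁻¹ = 1 :=
  PowerSeries.mul_inv_cancel _ (by rw [map_ofNat]; norm_num)

end PowerSeries

section Triangulations

variable {P : PowerSeries ℚ} (hP : P ^ 2 = 1 + 8 * X * P ^ 3)
include hP

theorem change_of_variables_eq_mul_one_sub_pow_three :
    X * (P * (9 - P ^ 2) * (8 : PowerSeries ℚ)⁻¹) ^ 3 = X * P ^ 3 * (1 - X * P ^ 3) ^ 3 := by
  have h : (9 - P ^ 2) * (8 : PowerSeries ℚ)⁻¹ = 1 - X * P ^ 3 := by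
    linear_combination (-(8 : PowerSeries ℚ)⁻¹) * hP
      + (1 - X * P ^ 3) * eight_mul_inv_eight (K := ℚ)
  linear_combination X * P ^ 3 * (((9 - P ^ 2) * (8 : PowerSeries ℚ)⁻¹) ^ 2
    + ((9 - P ^ 2) * (8 : PowerSeries ℚ)⁻¹) * (1 - X * P ^ 3) + (1 - X * P ^ 3) ^ 2) * h

theorem X_mul_pow_three_mul_add_one_sq_eq {W : PowerSeries ℚ}
    (hW : (P ^ 2 - 1) * (W + 1) ^ 2 = 8 * W) : X * P ^ 3 * (W + 1) ^ 2 = W := by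
  linear_combination (8 : PowerSeries ℚ)⁻¹ * (hW - (W + 1) ^ 2 * hP)
    - (X * P ^ 3 * (W + 1) ^ 2 - W) * eight_mul_inv_eight (K := ℚ)

end Triangulations

theorem subst_X_series_triang_general
    (P Q W Y : PowerSeries ℚ)
    (hP : P ^ 2 = 1 + 8 * X * P ^ 3)
    (hQ0 : constantCoeff Q = 0) (hQ : Q * (1 - Q) ^ 3 = X)
    (hW : (P ^ 2 - 1) * (W + 1) ^ 2 = 8 * W)
    (hY : Q * (Y + 1) ^ 2 = Y) :
    substInto (X * (P * (9 - P ^ 2) * (8 : PowerSeries ℚ)⁻¹) ^ 3) Y = W := by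
  set R : PowerSeries ℚ := X * P ^ 3
  have hR0 : constantCoeff R = 0 := by simp [R]
  have hy0 : constantCoeff (R * (1 - R) ^ 3) = 0 := by simp [hR0]
  have hy := HasSubst.of_constantCoeff_zero' hy0
  let φ : ℚ⟦X⟧ →ₐ[ℚ] ℚ⟦X⟧ := substAlgHom hy
  have hφQ : φ Q = R :=
    eq_of_mul_one_sub_pow_three_eq
      (by simp only [φ, coe_substAlgHom]; exact constantCoeff_subst_eq_zero hy0 Q hQ0) hR0
      (by simpa [φ, substAlgHom_X] using congrArg φ hQ)
  rw [change_of_variables_eq_mul_one_sub_pow_three hP, substInto_eq_subst hy0,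
    ← coe_substAlgHom hy]
  exact eq_of_mul_add_one_sq_eq hR0 (by simpa [hφQ] using congrArg φ hY)
    (X_mul_pow_three_mul_add_one_sq_eq hP hW)

/-- Let `P(0) = 1` with `P² = 1 + 8XP³` and `y := X·(P·(9−P²)/8)³`. Let `W(0) = 0`
satisfy `(P²−1)·(W + 1)² = 8W` and `Y(0) = 0` satisfy `Q·(Y + 1)² = Y`, where
`Q(0) = 0` and `Q·(1−Q)³ = T`. Then substituting `y` into `Y` gives `W`. -/
theorem subst_X_series_triang
    (P Q W Y : PowerSeries ℚ)
    (hP0 : constantCoeff P = 1) (hP : P ^ 2 = 1 + 8 * X * P ^ 3)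
    (hQ0 : constantCoeff Q = 0) (hQ : Q * (1 - Q) ^ 3 = X)
    (hW0 : constantCoeff W = 0) (hW : (P ^ 2 - 1) * (W + 1) ^ 2 = 8 * W)
    (hY0 : constantCoeff Y = 0) (hY : Q * (Y + 1) ^ 2 = Y) :
    substInto (X * (P * (9 - P ^ 2) * (8 : PowerSeries ℚ)⁻¹) ^ 3) Y = W :=
  subst_X_series_triang_general P Q W Y hP hQ0 hQ hW hY
end
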